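/- arXiv:1608.03820 — 2 statements merged into one kernel-verified Lean document; each statement's English description precedes it below -/
import Mathlib

section
/- For the multi-round F_Q bit commitment protocol, the maximal cheating probabilities satisfy g'_m ≤ g_{m+1} for all m ≥ 2: given any strategy S' = (s_1,...,s_m) for the symmetrized protocol P'_m, the strategy S = (s_1,...,s_m, 0̄) for P_{m+1} (where the last-round function always outputs 0) wins P_{m+1} on every input tuple (d, x_1,...,x_m) on which S' wins P'_m; hence max Pr[C'_m] ≤ max Pr[C_{m+1}]. -/
open Finset

/-- Embed the inputs x₁,…,xₙ (given as a vector) into a function ℕ → F (0 elsewhere). -/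
def extendVec {F : Type*} [Field F] (n : ℕ) (v : Fin n → F) : ℕ → F :=
  fun i => if h : 1 ≤ i ∧ i ≤ n then v ⟨i - 1, by omega⟩ else 0

/-- The recursively rolled-up check value: α₀ = d, αᵢ = yᵢ − xᵢ·αᵢ₋₁. -/
def alphaRec {F : Type*} [Field F] (d : F) (x y : ℕ → F) : ℕ → F
  | 0 => d
  | i + 1 => y (i + 1) - x (i + 1) * alphaRec d x y i

/-- The committed bit viewed as a field element. -/
def bitF (F : Type*) [Field F] (d : Bool) : F := if d then 1 else 0

/-- A valid (relativistic) cheating strategy: the round-1 answer depends only on x₁, and the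
round-i answer depends only on d, x₁,…,x_{i−2} and xᵢ. -/
def ValidStrategy {F : Type*} [Field F] (S : ℕ → F → (ℕ → F) → F) : Prop :=
  (∀ d d' x, S 1 d x = S 1 d' x) ∧
  (∀ i d x x', (∀ j, j + 2 ≤ i → x j = x' j) → x i = x' i → S i d x = S i d x')

/-- Winning condition of the m-round protocol P_m: y_m = α_{m−1}. -/
def winP {F : Type*} [Field F] (m : ℕ) (S : ℕ → F → (ℕ → F) → F)
    (d : Bool) (v : Fin (m - 1) → F) : Prop :=
  let x := extendVec (m - 1) v
  let y := fun i => S i (bitF F d) x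
  y m = alphaRec (bitF F d) x y (m - 1)

/-- Winning condition of the symmetrized m-round protocol P'_m: y_m = x_m·α_{m−1}. -/
def winP' {F : Type*} [Field F] (m : ℕ) (S : ℕ → F → (ℕ → F) → F)
    (d : Bool) (v : Fin m → F) : Prop :=
  let x := extendVec m v
  let y := fun i => S i (bitF F d) x
  y m = x m * alphaRec (bitF F d) x y (m - 1)

open scoped Classical in
/-- Winning probability of a strategy in P_m, for uniform d and x₁,…,x_{m−1}. -/
noncomputable def probP (F : Type*) [Field F] [Fintype F] [DecidableEq F]
    (m : ℕ) (S : ℕ → F → (ℕ → F) → F) : ℝ :=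
  ((Finset.univ.filter (fun p : Bool × (Fin (m - 1) → F) => winP m S p.1 p.2)).card : ℝ) /
    (Fintype.card (Bool × (Fin (m - 1) → F)) : ℝ)

open scoped Classical in
/-- Winning probability of a strategy in P'_m, for uniform d and x₁,…,x_m. -/
noncomputable def probP' (F : Type*) [Field F] [Fintype F] [DecidableEq F]
    (m : ℕ) (S : ℕ → F → (ℕ → F) → F) : ℝ :=
  ((Finset.univ.filter (fun p : Bool × (Fin m → F) => winP' m S p.1 p.2)).card : ℝ) /
    (Fintype.card (Bool × (Fin m → F)) : ℝ)

/-- g_m: Alice's maximal cheating probability in P_m. -/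
noncomputable def gP (F : Type*) [Field F] [Fintype F] [DecidableEq F] (m : ℕ) : ℝ :=
  sSup {p : ℝ | ∃ S, ValidStrategy S ∧ p = probP F m S}

/-- g'_m: Alice's maximal cheating probability in P'_m. -/
noncomputable def gP' (F : Type*) [Field F] [Fintype F] [DecidableEq F] (m : ℕ) : ℝ :=
  sSup {p : ℝ | ∃ S, ValidStrategy S ∧ p = probP' F m S}

def withZeroRound {F : Type*} [Field F] (S : ℕ → F → (ℕ → F) → F) (n : ℕ) :
    ℕ → F → (ℕ → F) → F :=
  fun i d x => if i = n then 0 else S i d x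

theorem ValidStrategy.withZeroRound {F : Type*} [Field F] {S : ℕ → F → (ℕ → F) → F}
    (hS : ValidStrategy S) {n : ℕ} (hn : n ≠ 1) : ValidStrategy (withZeroRound S n) := by
  refine ⟨fun d d' x => ?_, fun i d x x' hlow hi => ?_⟩
  · simpa only [_root_.withZeroRound, if_neg hn.symm] using hS.1 d d' x
  · by_cases h : i = n
    · simp only [_root_.withZeroRound, if_pos h]
    · simpa only [_root_.withZeroRound, if_neg h] using hS.2 i d x x' hlow hi

theorem validStrategy_zero {F : Type*} [Field F] :
    ValidStrategy (fun (_ : ℕ) (_ : F) (_ : ℕ → F) => (0 : F)) :=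
  ⟨fun _ _ _ => rfl, fun _ _ _ _ _ _ => rfl⟩

theorem alphaRec_congr {F : Type*} [Field F] (d : F) (x : ℕ → F) {y y' : ℕ → F} {k : ℕ}
    (h : ∀ i, 1 ≤ i → i ≤ k → y i = y' i) : alphaRec d x y k = alphaRec d x y' k := by
  induction k with
  | zero => rfl
  | succ k ih =>
    rw [alphaRec, alphaRec, h (k + 1) (by omega) le_rfl,
      ih fun i h₁ h₂ => h i h₁ (by omega)]

/-- A win in `P'_m` says `y_m = x_m α_{m-1}`, i.e. `α_m = 0`, which is exactly what the answer `0`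
in round `m + 1` has to match. -/
theorem winP_succ_withZeroRound_of_winP' {F : Type*} [Field F] {S : ℕ → F → (ℕ → F) → F}
    {m : ℕ} (hm : 1 ≤ m) {d : Bool} {v : Fin m → F} (h : winP' m S d v) :
    winP (m + 1) (withZeroRound S (m + 1)) d v := by
  obtain ⟨k, rfl⟩ : ∃ k, m = k + 1 := ⟨m - 1, by omega⟩
  set x := extendVec (k + 1) v
  set y := fun i => S i (bitF F d) x
  have hwin : y (k + 1) = x (k + 1) * alphaRec (bitF F d) x y k := h
  have hlow : ∀ i, 1 ≤ i → i ≤ k + 1 →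
      withZeroRound S (k + 2) i (bitF F d) x = y i :=
    fun i _ hi => if_neg (by omega)
  show withZeroRound S (k + 2) (k + 2) (bitF F d) x =
    alphaRec (bitF F d) x (fun i => withZeroRound S (k + 2) i (bitF F d) x) (k + 1)
  rw [alphaRec_congr _ _ hlow, alphaRec, ← hwin, sub_self]
  exact if_pos rfl

theorem probP_le_one (F : Type*) [Field F] [Fintype F] [DecidableEq F]
    (m : ℕ) (S : ℕ → F → (ℕ → F) → F) : probP F m S ≤ 1 := by
  classical
  rw [probP, div_le_one (by positivity)]
  exact_mod_cast card_filter_le _ _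

theorem probP_le_gP {F : Type*} [Field F] [Fintype F] [DecidableEq F] {m : ℕ}
    {S : ℕ → F → (ℕ → F) → F} (hS : ValidStrategy S) : probP F m S ≤ gP F m :=
  le_csSup ⟨1, by rintro _ ⟨S, -, rfl⟩; exact probP_le_one F m S⟩ ⟨S, hS, rfl⟩

theorem gP'_le_of_forall_probP'_le {F : Type*} [Field F] [Fintype F] [DecidableEq F] {m : ℕ}
    {c : ℝ} (h : ∀ S, ValidStrategy S → probP' F m S ≤ c) : gP' F m ≤ c :=
  csSup_le ⟨_, _, validStrategy_zero, rfl⟩ <| by rintro _ ⟨S, hS, rfl⟩; exact h S hS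

theorem probP'_le_probP_succ_of_forall_winP {F : Type*} [Field F] [Fintype F] [DecidableEq F]
    {m : ℕ} {S' S : ℕ → F → (ℕ → F) → F}
    (h : ∀ d v, winP' m S' d v → winP (m + 1) S d v) : probP' F m S' ≤ probP F (m + 1) S := by
  classical
  rw [probP, probP']
  have hsub := monotone_filter_right univ fun (p : Bool × (Fin m → F)) _ => h p.1 p.2
  exact div_le_div_of_nonneg_right (by exact_mod_cast card_le_card hsub) (Nat.cast_nonneg _)

/-- symmetrization, second inequality. Appending a final round in which
Alice outputs 0 turns any strategy for P'_m into a strategy for P_{m+1} that wins whenever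
the original one does; hence g'_m ≤ g_{m+1}. -/
theorem gP'_le_gP_succ (F : Type*) [Field F] [Fintype F] [DecidableEq F]
    (m : ℕ) (hm : 2 ≤ m) :
    (∀ S' : ℕ → F → (ℕ → F) → F, ValidStrategy S' →
      ∀ (d : Bool) (v : Fin m → F),
        winP' m S' d v →
          winP (m + 1) (fun i d x => if i = m + 1 then 0 else S' i d x) d v) ∧
    gP' F m ≤ gP F (m + 1) := by
  have hwin (S' : ℕ → F → (ℕ → F) → F) (d : Bool) (v : Fin m → F) (h : winP' m S' d v) :
      winP (m + 1) (withZeroRound S' (m + 1)) d v :=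
    winP_succ_withZeroRound_of_winP' (by omega) h
  refine ⟨fun S' _ => hwin S', gP'_le_of_forall_probP'_le fun S' hS' => ?_⟩
  calc probP' F m S' ≤ probP F (m + 1) (withZeroRound S' (m + 1)) :=
        probP'_le_probP_succ_of_forall_winP (hwin S')
    _ ≤ gP F (m + 1) := probP_le_gP (hS'.withZeroRound (by omega))
end

section
/- For the symmetrized F_Q protocol, the maximal cheating probabilities satisfy the recursion 1 − g'_{k+3} ≤ (1 − 1/Q)(1 − ω(CHSH_Q))·(1 − g'_k) for all k ≥ 2, where g'_k denotes the maximum over cheating strategies of the probability that the k-round winning condition ∑_{i=1}^{k} ỹ_i·∏_{j=i+1}^{k} x_j = d·∏_{j=1}^{k} x_j holds, with d uniform in {0,1} ⊆ F_Q and x_1,...,x_k independent uniform in F_Q, and where a strategy specifies ỹ_i as a function of (d, x_1,...,x_{i-2}, x_i). -/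
open Finset

open scoped Classical in
/-- Winning probability of a strategy in the symmetrized m-round protocol, in sum form:
the outputs ỹᵢ = S i d x must satisfy ∑ᵢ ỹᵢ ∏_{j>i} xⱼ = d ∏ⱼ xⱼ, for uniform d and
x₁,…,x_m. -/
noncomputable def probSym (F : Type*) [Field F] [Fintype F] [DecidableEq F]
    (m : ℕ) (S : ℕ → F → (ℕ → F) → F) : ℝ :=
  ((Finset.univ.filter (fun p : Bool × (Fin m → F) =>
      let x := extendVec m p.2
      let ty := fun i => S i (bitF F p.1) x
      (∑ i ∈ Finset.Icc 1 m, ty i * ∏ j ∈ Finset.Icc (i + 1) m, x j)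
        = bitF F p.1 * ∏ j ∈ Finset.Icc 1 m, x j)).card : ℝ) /
    (Fintype.card (Bool × (Fin m → F)) : ℝ)

/-- g'_m: Alice's maximal cheating probability in the symmetrized m-round protocol. -/
noncomputable def gSym (F : Type*) [Field F] [Fintype F] [DecidableEq F] (m : ℕ) : ℝ :=
  sSup {p : ℝ | ∃ S, ValidStrategy S ∧ p = probSym F m S}

/-- Winning probability of a deterministic CHSH_Q strategy (uniform inputs). -/
noncomputable def chshProb (F : Type*) [Field F] [Fintype F] [DecidableEq F]
    (s1 s2 : F → F) : ℝ :=
  ((Finset.univ.filter (fun p : F × F => s1 p.1 + s2 p.2 = p.1 * p.2)).card : ℝ) /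
    (Fintype.card F : ℝ) ^ 2

/-- The classical value of the CHSH_Q game. -/
noncomputable def omegaCHSH (F : Type*) [Field F] [Fintype F] [DecidableEq F] : ℝ :=
  sSup {p : ℝ | ∃ s1 s2 : F → F, p = chshProb F s1 s2}

/-!
Given a `k`-round strategy with defect `η = d ∏ xⱼ - ∑ ỹᵢ ∏_{j>i} xⱼ`, answer `0` in round `k+1`,
`η a` in round `k+2` and `η b x_{k+3}` in round `k+3`, where `a = s₁(x_{k+2})`, `b = s₂(x_{k+1})`
come from a CHSH_Q strategy. The defect of the extended strategy factors as
`η · (x_{k+1} x_{k+2} - a - b) · x_{k+3}`, and its three factors depend on disjoint blocks of the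
uniform inputs. So the extended strategy loses exactly when the `k`-round strategy loses, the
CHSH_Q game is lost and `x_{k+3} ≠ 0`, with probability `(1 - p_k)(1 - p_CHSH)(1 - 1/Q)`.
Since only finitely many winning probabilities occur, `g'_k` and `ω(CHSH_Q)` are attained.
-/

section Tuples
variable {F : Type*} [Field F]

lemma extendVec_snoc_of_le {n : ℕ} (v : Fin n → F) (c : F) {j : ℕ} (hj : j ≤ n) :
    extendVec (n + 1) (Fin.snoc v c) j = extendVec n v j := by
  unfold extendVec
  by_cases h : 1 ≤ j
  · rw [dif_pos ⟨h, by omega⟩, dif_pos ⟨h, hj⟩]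
    simp [Fin.snoc, show j - 1 < n by omega]
  · rw [dif_neg (by omega), dif_neg (by omega)]

lemma extendVec_snoc_self {n : ℕ} (v : Fin n → F) (c : F) :
    extendVec (n + 1) (Fin.snoc v c) (n + 1) = c := by
  simp [extendVec, Fin.snoc]

end Tuples

-- The paper's `η`: the strategy wins on `(d, x)` iff its defect vanishes.
def winDefect {F : Type*} [Field F] (S : ℕ → F → (ℕ → F) → F) (m : ℕ) (d : F) (x : ℕ → F) :
    F :=
  d * ∏ j ∈ Icc 1 m, x j - ∑ i ∈ Icc 1 m, S i d x * ∏ j ∈ Icc (i + 1) m, x j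

lemma winDefect_congr {F : Type*} [Field F] {S : ℕ → F → (ℕ → F) → F} (hS : ValidStrategy S)
    {m : ℕ} (d : F) {x x' : ℕ → F} (h : ∀ j ≤ m, x j = x' j) :
    winDefect S m d x = winDefect S m d x' := by
  have hprod : ∀ a, ∏ j ∈ Icc a m, x j = ∏ j ∈ Icc a m, x' j := fun a ↦
    prod_congr rfl fun j hj ↦ h j (mem_Icc.1 hj).2
  refine congrArg₂ (· - ·) (by rw [hprod]) (sum_congr rfl fun i hi ↦ ?_)
  have him := (mem_Icc.1 hi).2
  rw [hS.2 i d x x' (fun j hj ↦ h j (by omega)) (h i him), hprod]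

def extendStrategy {F : Type*} [Field F] (S : ℕ → F → (ℕ → F) → F) (s1 s2 : F → F) (k : ℕ) :
    ℕ → F → (ℕ → F) → F :=
  fun i d x ↦
    if i = k + 1 then 0
    else if i = k + 2 then winDefect S k d x * s1 (x (k + 2))
    else if i = k + 3 then winDefect S k d x * s2 (x (k + 1)) * x (k + 3)
    else S i d x

section Extension
variable {F : Type*} [Field F] (S : ℕ → F → (ℕ → F) → F) (s1 s2 : F → F) (k : ℕ)

lemma extendStrategy_of_le {i : ℕ} (hi : i ≤ k) (d : F) (x : ℕ → F) :
    extendStrategy S s1 s2 k i d x = S i d x := by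
  simp only [extendStrategy, if_neg (show i ≠ k + 1 by omega), if_neg (show i ≠ k + 2 by omega),
    if_neg (show i ≠ k + 3 by omega)]

variable {S} in
lemma extendStrategy_valid (hS : ValidStrategy S) : ValidStrategy (extendStrategy S s1 s2 k) := by
  constructor
  · intro d d' x
    unfold extendStrategy
    split_ifs <;> first | rfl | omega | exact hS.1 d d' x
  · intro i d x x' hlow hi
    have hη : k + 2 ≤ i → winDefect S k d x = winDefect S k d x' := fun hki ↦
      winDefect_congr hS d fun j hj ↦ hlow j (by omega)
    unfold extendStrategy
    split_ifs with h1 h2 h3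
    · rfl
    · subst h2; rw [hη le_rfl, hi]
    · subst h3; rw [hη (by omega), hi, hlow (k + 1) (by omega)]
    · exact hS.2 i d x x' hlow hi

lemma winDefect_extendStrategy (d : F) (x : ℕ → F) :
    winDefect (extendStrategy S s1 s2 k) (k + 3) d x =
      winDefect S k d x * (x (k + 1) * x (k + 2) - (s1 (x (k + 2)) + s2 (x (k + 1)))) *
        x (k + 3) := by
  have hprod : ∀ a ≤ k + 1, ∏ j ∈ Icc a (k + 3), x j =
      (∏ j ∈ Icc a k, x j) * x (k + 1) * x (k + 2) * x (k + 3) := fun a ha ↦ by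
    rw [prod_Icc_succ_top (by omega), prod_Icc_succ_top (by omega), prod_Icc_succ_top ha]
  have hsum : ∑ i ∈ Icc 1 (k + 3), extendStrategy S s1 s2 k i d x *
        ∏ j ∈ Icc (i + 1) (k + 3), x j =
      (∑ i ∈ Icc 1 k, S i d x * ∏ j ∈ Icc (i + 1) k, x j) * (x (k + 1) * x (k + 2) * x (k + 3))
        + winDefect S k d x * s1 (x (k + 2)) * x (k + 3)
        + winDefect S k d x * s2 (x (k + 1)) * x (k + 3) := by
    have hterm : ∀ i ∈ Icc 1 k, extendStrategy S s1 s2 k i d x * ∏ j ∈ Icc (i + 1) (k + 3), x j =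
        S i d x * (∏ j ∈ Icc (i + 1) k, x j) * (x (k + 1) * x (k + 2) * x (k + 3)) := fun i hi ↦ by
      have hik := (mem_Icc.1 hi).2
      rw [extendStrategy_of_le S s1 s2 k hik, hprod (i + 1) (by omega)]
      ring
    rw [sum_Icc_succ_top (by omega), sum_Icc_succ_top (by omega), sum_Icc_succ_top (by omega),
      sum_congr rfl hterm, ← sum_mul]
    simp [extendStrategy]
  rw [winDefect, hsum, hprod 1 (by omega)]
  unfold winDefect
  ring

end Extension

lemma one_sub_card_filter_div {α : Type*} [Fintype α] [Nonempty α] (p : α → Prop)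
    [DecidablePred p] :
    1 - (#(univ.filter p) : ℝ) / Fintype.card α =
      #(univ.filter fun a ↦ ¬ p a) / Fintype.card α := by
  have hpos : (0 : ℝ) < Fintype.card α := by exact_mod_cast Fintype.card_pos
  have hsplit : (Fintype.card α : ℝ) = #(univ.filter p) + #(univ.filter fun a ↦ ¬ p a) := by
    rw [← card_univ, ← card_filter_add_card_filter_not (s := univ) p, Nat.cast_add]
  rw [eq_div_iff hpos.ne', sub_mul, div_mul_cancel₀ _ hpos.ne', one_mul, hsplit]
  ring

section Counting
variable (F : Type*) [Field F] [Fintype F] [DecidableEq F]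

lemma one_sub_probSym (m : ℕ) (S : ℕ → F → (ℕ → F) → F) :
    1 - probSym F m S =
      #(univ.filter fun p : Bool × (Fin m → F) ↦ winDefect S m (bitF F p.1) (extendVec m p.2) ≠ 0)
        / Fintype.card (Bool × (Fin m → F)) := by
  rw [probSym, one_sub_card_filter_div]
  congr 3
  ext p
  simp only [mem_filter, mem_univ, true_and, winDefect, ne_eq, sub_eq_zero]
  exact not_congr eq_comm

lemma one_sub_chshProb (s1 s2 : F → F) :
    1 - chshProb F s1 s2 =
      #(univ.filter fun p : F × F ↦ ¬ s1 p.1 + s2 p.2 = p.1 * p.2) / Fintype.card (F × F) := by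
  rw [← one_sub_card_filter_div, chshProb, Fintype.card_prod]
  push_cast
  ring

lemma one_sub_one_div_card :
    1 - 1 / (Fintype.card F : ℝ) = #(univ.filter fun z : F ↦ z ≠ 0) / Fintype.card F := by
  rw [← one_sub_card_filter_div (· = (0 : F)), filter_eq', if_pos (mem_univ _), card_singleton,
    Nat.cast_one]

end Counting

-- `((d, u), (a, b), c) ↦ (d, u ++ [b, a, c])`: the CHSH_Q inputs are `(a, b) = (x_{k+2}, x_{k+1})`.
def splitInputs (F : Type*) (k : ℕ) :
    (Bool × (Fin k → F)) × (F × F) × F ≃ Bool × (Fin (k + 3) → F) where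
  toFun q := (q.1.1, Fin.snoc (Fin.snoc (Fin.snoc q.1.2 q.2.1.2) q.2.1.1) q.2.2)
  invFun p := ((p.1, Fin.init (Fin.init (Fin.init p.2))),
    (Fin.init p.2 (Fin.last _), Fin.init (Fin.init p.2) (Fin.last _)), p.2 (Fin.last _))
  left_inv := by rintro ⟨⟨d, u⟩, ⟨a, b⟩, c⟩; simp
  right_inv := by rintro ⟨d, v⟩; simp

section SplitInputs
variable {F : Type*} [Field F] {S : ℕ → F → (ℕ → F) → F} (s1 s2 : F → F) (k : ℕ)

lemma winDefect_extendStrategy_snoc (hS : ValidStrategy S) (d : F) (u : Fin k → F) (a b c : F) :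
    winDefect (extendStrategy S s1 s2 k) (k + 3) d
        (extendVec (k + 3)
          (Fin.snoc (Fin.snoc (Fin.snoc u b : Fin (k + 1) → F) a : Fin (k + 2) → F) c)) =
      winDefect S k d (extendVec k u) * (b * a - (s1 a + s2 b)) * c := by
  set v : Fin (k + 2) → F := Fin.snoc (Fin.snoc u b : Fin (k + 1) → F) a
  have hlow : ∀ j ≤ k, extendVec (k + 3) (Fin.snoc v c) j = extendVec k u j := fun j hj ↦ by
    rw [extendVec_snoc_of_le _ _ (by omega), extendVec_snoc_of_le _ _ (by omega),
      extendVec_snoc_of_le _ _ hj]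
  have hb : extendVec (k + 3) (Fin.snoc v c) (k + 1) = b := by
    rw [extendVec_snoc_of_le _ _ (by omega), extendVec_snoc_of_le _ _ le_rfl,
      extendVec_snoc_self]
  have ha : extendVec (k + 3) (Fin.snoc v c) (k + 2) = a := by
    rw [extendVec_snoc_of_le _ _ le_rfl, extendVec_snoc_self]
  rw [winDefect_extendStrategy, winDefect_congr hS _ hlow, hb, ha, extendVec_snoc_self]

lemma card_filter_winDefect_extendStrategy_ne_zero [Fintype F] [DecidableEq F]
    (hS : ValidStrategy S) :
    #(univ.filter fun p : Bool × (Fin (k + 3) → F) ↦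
        winDefect (extendStrategy S s1 s2 k) (k + 3) (bitF F p.1) (extendVec (k + 3) p.2) ≠ 0) =
      #(univ.filter fun p : Bool × (Fin k → F) ↦ winDefect S k (bitF F p.1) (extendVec k p.2) ≠ 0)
        * #(univ.filter fun p : F × F ↦ ¬ s1 p.1 + s2 p.2 = p.1 * p.2)
        * #(univ.filter fun z : F ↦ z ≠ 0) := by
  rw [mul_assoc, ← card_product, ← card_product, ← filter_product, ← filter_product,
    univ_product_univ, univ_product_univ]
  refine (card_equiv (splitInputs F k) fun q ↦ ?_).symm
  obtain ⟨⟨d, u⟩, ⟨a, b⟩, c⟩ := q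
  simp only [mem_filter, mem_univ, true_and, splitInputs, Equiv.coe_fn_mk,
    winDefect_extendStrategy_snoc s1 s2 k hS, mul_ne_zero_iff, sub_ne_zero, mul_comm b a,
    ne_comm (a := s1 a + s2 b), and_assoc]

end SplitInputs

section Optimal
variable (F : Type*) [Field F] [Fintype F] [DecidableEq F]

lemma finite_probSym_values (m : ℕ) :
    {p : ℝ | ∃ S, ValidStrategy S ∧ p = probSym F m S}.Finite :=
  (Set.finite_range fun s : Finset (Bool × (Fin m → F)) ↦
      (#s : ℝ) / Fintype.card (Bool × (Fin m → F))).subset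
    (by rintro _ ⟨S, -, rfl⟩; exact ⟨_, rfl⟩)

variable {F} in
lemma probSym_le_gSym {m : ℕ} {S : ℕ → F → (ℕ → F) → F} (hS : ValidStrategy S) :
    probSym F m S ≤ gSym F m :=
  le_csSup (finite_probSym_values F m).bddAbove ⟨S, hS, rfl⟩

lemma exists_validStrategy_gSym_eq (m : ℕ) :
    ∃ S, ValidStrategy S ∧ gSym F m = probSym F m S :=
  Set.Nonempty.csSup_mem (s := {p : ℝ | ∃ S, ValidStrategy S ∧ p = probSym F m S})
    ⟨_, fun _ _ _ ↦ 0, ⟨fun _ _ _ ↦ rfl, fun _ _ _ _ _ _ ↦ rfl⟩, rfl⟩ (finite_probSym_values F m)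

lemma exists_omegaCHSH_eq : ∃ s1 s2 : F → F, omegaCHSH F = chshProb F s1 s2 :=
  Set.Nonempty.csSup_mem (s := {p : ℝ | ∃ s1 s2 : F → F, p = chshProb F s1 s2}) ⟨_, 0, 0, rfl⟩
    ((Set.finite_range fun s : (F → F) × (F → F) ↦ chshProb F s.1 s.2).subset
      (by rintro _ ⟨s1, s2, rfl⟩; exact ⟨(s1, s2), rfl⟩))

end Optimal

lemma one_sub_probSym_extendStrategy {F : Type*} [Field F] [Fintype F] [DecidableEq F]
    {S : ℕ → F → (ℕ → F) → F} (hS : ValidStrategy S) (s1 s2 : F → F) (k : ℕ) :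
    1 - probSym F (k + 3) (extendStrategy S s1 s2 k) =
      (1 - 1 / (Fintype.card F : ℝ)) * (1 - chshProb F s1 s2) * (1 - probSym F k S) := by
  rw [one_sub_probSym, one_sub_probSym, one_sub_chshProb, one_sub_one_div_card,
    card_filter_winDefect_extendStrategy_ne_zero s1 s2 k hS,
    ← Fintype.card_congr (splitInputs F k)]
  simp only [Fintype.card_prod, Nat.cast_mul]
  ring

theorem gSym_recursion_general (F : Type*) [Field F] [Fintype F] [DecidableEq F]
    (k : ℕ) :
    1 - gSym F (k + 3) ≤
      (1 - 1 / (Fintype.card F : ℝ)) * (1 - omegaCHSH F) * (1 - gSym F k) := by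
  obtain ⟨S, hS, hgS⟩ := exists_validStrategy_gSym_eq F k
  obtain ⟨s1, s2, hω⟩ := exists_omegaCHSH_eq F
  calc 1 - gSym F (k + 3) ≤ 1 - probSym F (k + 3) (extendStrategy S s1 s2 k) :=
        sub_le_sub_left (probSym_le_gSym (extendStrategy_valid s1 s2 k hS)) 1
    _ = _ := by rw [one_sub_probSym_extendStrategy hS, hgS, hω]

/-- the recursion 1 − g'_{k+3} ≤ (1 − 1/Q)(1 − ω(CHSH_Q))·(1 − g'_k)
for all k ≥ 2. -/
theorem gSym_recursion (F : Type*) [Field F] [Fintype F] [DecidableEq F]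
    (k : ℕ) (hk : 2 ≤ k) :
    1 - gSym F (k + 3) ≤
      (1 - 1 / (Fintype.card F : ℝ)) * (1 - omegaCHSH F) * (1 - gSym F k) :=
  gSym_recursion_general F k
end
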